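/- arXiv:1805.08339 — 4 statements merged into one kernel-verified Lean document; each statement's English description precedes it below -/
import Mathlib

section
/- Fix w ∈ ℝ and let a_n, b_n → ∞ be sequences of positive reals, and define v_n by (1/a_n)(log a_n + w) = (1/b_n)(log b_n + v_n). If b_n - a_n = o(a_n / log a_n), then v_n - w → 0. Conversely, if for every w ∈ ℝ the corresponding v_n satisfies v_n - w → 0, then b_n - a_n = o(a_n / log a_n). -/
/-!
Solving the defining relation for `vₙ` gives the exact identity
`vₙ - w = rₙ + (bₙ/aₙ - 1) w - log (bₙ/aₙ)` with `rₙ = (bₙ - aₙ)/(aₙ/log aₙ) = (bₙ/aₙ - 1) log aₙ`.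
If `rₙ → 0` then `bₙ/aₙ - 1 = rₙ / log aₙ → 0`, so every term vanishes. Conversely, the
difference of the identities for `w = 1` and `w = 0` is `bₙ/aₙ - 1`, so `bₙ/aₙ → 1`, and then the
identity for `w = 0` gives `rₙ → 0`.
-/

open Real Filter Topology

-- No condition on `log a` is needed: `x / (a / log a) = x * log a / a` also when `log a = 0`.
lemma sub_eq_of_inv_mul_log_add_eq {a b w v : ℝ} (ha : a ≠ 0) (hb : b ≠ 0)
    (h : 1 / a * (log a + w) = 1 / b * (log b + v)) :
    v - w = (b - a) / (a / log a) + (b / a - 1) * w - log (b / a) := by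
  have hv : v = b / a * (log a + w) - log b := by
    field_simp at h ⊢
    linarith
  rw [hv, log_div hb ha, div_div_eq_mul_div]
  field_simp
  ring

lemma tendsto_div_one_of_tendsto_sub_div_div_log {α : Type*} {l : Filter α} {a b : α → ℝ}
    (ha : Tendsto a l atTop)
    (hr : Tendsto (fun n => (b n - a n) / (a n / log (a n))) l (𝓝 0)) :
    Tendsto (fun n => b n / a n) l (𝓝 1) := by
  have hsub : Tendsto (fun n => b n / a n - 1) l (𝓝 0) := by
    refine (hr.div_atTop (tendsto_log_atTop.comp ha)).congr' ?_
    filter_upwards [ha.eventually_gt_atTop 1] with n hn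
    have hlog : log (a n) ≠ 0 := (log_pos hn).ne'
    have ha0 : a n ≠ 0 := by positivity
    simp only [Function.comp_apply]
    field_simp
  simpa using hsub.add_const 1

theorem gumbel_robustness_general (a b : ℕ → ℝ) (v : ℝ → ℕ → ℝ)
    (ha_pos : ∀ n, 0 < a n) (hb_pos : ∀ n, 0 < b n)
    (ha : Tendsto a atTop atTop)
    (hv : ∀ (w : ℝ) (n : ℕ),
      (1 / a n) * (Real.log (a n) + w) = (1 / b n) * (Real.log (b n) + v w n)) :
    (Tendsto (fun n => (b n - a n) / (a n / Real.log (a n))) atTop (nhds 0))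
      ↔ (∀ w : ℝ, Tendsto (fun n => v w n - w) atTop (nhds 0)) := by
  have hvw (w : ℝ) (n : ℕ) := sub_eq_of_inv_mul_log_add_eq (ha_pos n).ne' (hb_pos n).ne' (hv w n)
  constructor
  · intro hr w
    have hratio := tendsto_div_one_of_tendsto_sub_div_div_log ha hr
    simp_rw [hvw w]
    simpa using (hr.add ((hratio.sub_const 1).mul_const w)).sub (hratio.log one_ne_zero)
  · intro h
    have hratio : Tendsto (fun n => b n / a n) atTop (𝓝 1) := by
      have hlim := ((h 1).sub (h 0)).add_const 1
      rw [sub_self, zero_add] at hlim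
      refine hlim.congr fun n => ?_
      rw [hvw, hvw]
      ring
    have hlim := (h 0).add (hratio.log one_ne_zero)
    rw [log_one, add_zero] at hlim
    refine hlim.congr fun n => ?_
    rw [hvw]
    ring

/-- Key lemma for the Gumbel scaling: with `v w n` defined by
`(1/aₙ)(log aₙ + w) = (1/bₙ)(log bₙ + v w n)`, one has `v w n - w → 0` for
every `w` if and only if `bₙ - aₙ = o(aₙ / log aₙ)`. -/
theorem gumbel_robustness (a b : ℕ → ℝ) (v : ℝ → ℕ → ℝ)
    (ha_pos : ∀ n, 0 < a n) (hb_pos : ∀ n, 0 < b n)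
    (ha : Tendsto a atTop atTop) (hb : Tendsto b atTop atTop)
    (hv : ∀ (w : ℝ) (n : ℕ),
      (1 / a n) * (Real.log (a n) + w) = (1 / b n) * (Real.log (b n) + v w n)) :
    (Tendsto (fun n => (b n - a n) / (a n / Real.log (a n))) atTop (nhds 0))
      ↔ (∀ w : ℝ, Tendsto (fun n => v w n - w) atTop (nhds 0)) :=
  gumbel_robustness_general a b v ha_pos hb_pos ha hv
end

section
/- Define ρ_t = 1/(1 + 1/t) for t > 0 (extinction probability of a critical binary branching process from one individual by time t). Let Z₀ₙ → ∞, a_n = γ_n Z₀ₙ → a_∞ ∈ [0,∞) where γ_n ≥ 0, and fix w > 0. With ρ_t^{-1} = 1 + γ_n/(e^{γ_n t} - 1) (interpreted as 1 + 1/t when γ_n = 0), one has ρ_{wZ₀ₙ}^{Z₀ₙ} → e^{-1/w} if a_∞ = 0, and ρ_{wZ₀ₙ}^{Z₀ₙ} → exp(-a_∞/(e^{a_∞ w} - 1)) if a_∞ > 0. -/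
/-!
Let `s x = (e^{w x} - 1) / x`, extended continuously by `s 0 = w`; this is
`dslope (fun x => exp (w * x)) 0`. Both branches of the definition of `ρ` give
`ρ_{wZ}⁻¹ = 1 + (Z s(γ Z))⁻¹`, so with `c_n = ρ_{wZ₀ₙ}⁻¹ - 1` we get
`Z₀ₙ c_n = s(a_n)⁻¹ → s(a_∞)⁻¹`. Finally `(1 + c_n)^{Z₀ₙ} → exp L` whenever `Z₀ₙ c_n → L`,
because `log (1 + c) = c · dslope log 1 (1 + c)` and this difference quotient tends to `log' 1 = 1`.
-/

open Real Filter Topology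

theorem tendsto_one_add_pow_exp_of_tendsto_mul {ι : Type*} {l : Filter ι} {Z : ι → ℕ}
    {c : ι → ℝ} {L : ℝ} (hZ : Tendsto (fun i => (Z i : ℝ)) l atTop)
    (hc : Tendsto (fun i => Z i * c i) l (𝓝 L)) :
    Tendsto (fun i => (1 + c i) ^ Z i) l (𝓝 (exp L)) := by
  have hc0 : Tendsto c l (𝓝 0) := by
    refine (hc.div_atTop hZ).congr' ?_
    filter_upwards [hZ.eventually_gt_atTop 0] with i hi
    field_simp
  have hlog : Tendsto (fun i => dslope log 1 (1 + c i)) l (𝓝 1) := by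
    have hcont : ContinuousAt (dslope log 1) 1 :=
      continuousAt_dslope_same.2 (differentiableAt_log one_ne_zero)
    have h1c : Tendsto (fun i => 1 + c i) l (𝓝 1) := by simpa using hc0.const_add 1
    simpa [Function.comp_def] using hcont.tendsto.comp h1c
  refine ((continuous_exp.tendsto L).comp (by simpa using hc.mul hlog)).congr' ?_
  filter_upwards [hc0.eventually_const_lt (show (-1 : ℝ) < 0 by norm_num)] with i hi
  have hmul : c i * dslope log 1 (1 + c i) = log (1 + c i) := by
    simpa using sub_smul_dslope log 1 (1 + c i)
  rw [Function.comp_apply, mul_assoc, hmul, exp_nat_mul, exp_log (by linarith)]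

theorem dslope_exp_mul_zero (w : ℝ) : dslope (fun x => exp (w * x)) 0 0 = w := by
  rw [dslope_same]
  simpa using (((hasDerivAt_id (0 : ℝ)).const_mul w).exp).deriv

theorem dslope_exp_mul_of_ne (w : ℝ) {x : ℝ} (hx : x ≠ 0) :
    dslope (fun x => exp (w * x)) 0 x = (exp (w * x) - 1) / x := by
  simp [dslope_of_ne _ hx, slope_def_field]

theorem continuous_dslope_exp_mul (w : ℝ) : Continuous (dslope (fun x => exp (w * x)) 0) := by
  rw [← continuousOn_univ, continuousOn_dslope Filter.univ_mem]
  exact ⟨by fun_prop, by fun_prop⟩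

theorem dslope_exp_mul_pos {w : ℝ} (hw : 0 < w) (x : ℝ) :
    0 < dslope (fun x => exp (w * x)) 0 x := by
  rcases lt_trichotomy x 0 with hx | rfl | hx
  · rw [dslope_exp_mul_of_ne w hx.ne]
    exact div_pos_of_neg_of_neg (by simpa using mul_neg_of_pos_of_neg hw hx) hx
  · rwa [dslope_exp_mul_zero]
  · rw [dslope_exp_mul_of_ne w hx.ne']
    exact div_pos (by simpa using mul_pos hw hx) hx

theorem one_add_div_exp_sub_one_eq_one_add_inv_dslope {Z : ℝ} (hZ : Z ≠ 0) (w γ : ℝ) :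
    (if γ = 0 then 1 + 1 / (w * Z) else 1 + γ / (exp (γ * (w * Z)) - 1)) =
      1 + (Z * dslope (fun x => exp (w * x)) 0 (γ * Z))⁻¹ := by
  split_ifs with hγ
  · rw [hγ, zero_mul, dslope_exp_mul_zero, one_div, mul_comm]
  · rw [dslope_exp_mul_of_ne w (mul_ne_zero hγ hZ)]
    field_simp

theorem bbp_rescaled_extinction_general (γ : ℕ → ℝ) (Z₀ : ℕ → ℕ) (a : ℕ → ℝ) (aInf w : ℝ)
    (hZ₀ : Tendsto (fun n => (Z₀ n : ℝ)) atTop atTop)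
    (ha : ∀ n, a n = γ n * (Z₀ n : ℝ))
    (haInf : Tendsto a atTop (nhds aInf))
    (hw : 0 < w)
    (ρ : ℕ → ℝ → ℝ)
    (hρ : ∀ n t, ρ n t =
      (if γ n = 0 then 1 + 1 / t else 1 + γ n / (Real.exp (γ n * t) - 1))⁻¹) :
    (aInf = 0 →
      Tendsto (fun n => ρ n (w * (Z₀ n : ℝ)) ^ (Z₀ n)) atTop (nhds (Real.exp (-1 / w)))) ∧
    (0 < aInf →
      Tendsto (fun n => ρ n (w * (Z₀ n : ℝ)) ^ (Z₀ n)) atTop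
        (nhds (Real.exp (-aInf / (Real.exp (aInf * w) - 1))))) := by
  have hZ₀_pos := hZ₀.eventually_gt_atTop 0
  have hmul : Tendsto (fun n => (Z₀ n : ℝ) * (Z₀ n * dslope (fun x => exp (w * x)) 0 (a n))⁻¹)
      atTop (𝓝 (dslope (fun x => exp (w * x)) 0 aInf)⁻¹) := by
    refine ((((continuous_dslope_exp_mul w).tendsto aInf).comp haInf).inv₀
      (dslope_exp_mul_pos hw aInf).ne').congr' ?_
    filter_upwards [hZ₀_pos] with n hn
    rw [Function.comp_apply, mul_inv, mul_inv_cancel_left₀ hn.ne']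
  have hlim : Tendsto (fun n => ρ n (w * Z₀ n) ^ Z₀ n) atTop
      (𝓝 (exp (-(dslope (fun x => exp (w * x)) 0 aInf)⁻¹))) := by
    rw [exp_neg]
    refine ((tendsto_one_add_pow_exp_of_tendsto_mul hZ₀ hmul).inv₀ (exp_ne_zero _)).congr' ?_
    filter_upwards [hZ₀_pos] with n hn
    rw [hρ, one_add_div_exp_sub_one_eq_one_add_inv_dslope hn.ne', ← ha, inv_pow]
  refine ⟨fun h0 => ?_, fun hpos => ?_⟩
  · rwa [h0, dslope_exp_mul_zero, ← one_div, ← neg_div] at hlim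
  · rwa [dslope_exp_mul_of_ne w hpos.ne', inv_div, mul_comm, ← neg_div] at hlim

/-- Rescaled extinction-time law of a (sub)critical binary branching process:
`ρ n t` is the extinction probability by time `t` of a single line, with
`ρ_t⁻¹ = 1 + γ/(e^{γt} - 1)`, interpreted as `1 + 1/t` when `γ = 0`. -/
theorem bbp_rescaled_extinction (γ : ℕ → ℝ) (Z₀ : ℕ → ℕ) (a : ℕ → ℝ) (aInf w : ℝ)
    (hγ : ∀ n, 0 ≤ γ n)
    (hZ₀ : Tendsto (fun n => (Z₀ n : ℝ)) atTop atTop)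
    (ha : ∀ n, a n = γ n * (Z₀ n : ℝ))
    (haInf : Tendsto a atTop (nhds aInf)) (haInf0 : 0 ≤ aInf)
    (hw : 0 < w)
    (ρ : ℕ → ℝ → ℝ)
    (hρ : ∀ n t, ρ n t =
      (if γ n = 0 then 1 + 1 / t else 1 + γ n / (Real.exp (γ n * t) - 1))⁻¹) :
    (aInf = 0 →
      Tendsto (fun n => ρ n (w * (Z₀ n : ℝ)) ^ (Z₀ n)) atTop (nhds (Real.exp (-1 / w)))) ∧
    (0 < aInf →
      Tendsto (fun n => ρ n (w * (Z₀ n : ℝ)) ^ (Z₀ n)) atTop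
        (nhds (Real.exp (-aInf / (Real.exp (aInf * w) - 1))))) :=
  bbp_rescaled_extinction_general γ Z₀ a aInf w hZ₀ ha haInf hw ρ hρ
end

section
/- Let γ_n ∈ (0,1), Z₀ₙ → ∞ with a_n = γ_n Z₀ₙ → ∞, and fix w ∈ ℝ. Define t_n = γ_n⁻¹(log a_n + w) and ρ_t^{-1} = 1 + γ_n/(e^{γ_n t} - 1). Then ρ_{t_n}^{Z₀ₙ} → exp(-e^{-w}) as n → ∞. -/
open Real Filter Topology

/-! At `t = tₙ` we have `exp (γ t) = a eʷ`, so `x := ρ_t⁻¹ - 1 = γ / (a eʷ - 1)` satisfies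
`x Z₀ = a / (a eʷ - 1) → e⁻ʷ`.
The Gumbel limit is then the compound-interest limit `(1 + x)^(-Z₀) → exp (-lim x Z₀)`,
obtained from `x / (1 + x) ≤ log (1 + x) ≤ x`. -/

section CompoundInterest

variable {ι : Type*} {l : Filter ι} {x : ι → ℝ} {N : ι → ℕ} {c : ℝ}

lemma tendsto_zero_of_tendsto_mul_natCast (hN : Tendsto (fun i => (N i : ℝ)) l atTop)
    (hxN : Tendsto (fun i => x i * N i) l (𝓝 c)) : Tendsto x l (𝓝 0) := by
  have h := hxN.mul hN.inv_tendsto_atTop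
  rw [mul_zero] at h
  refine h.congr' ?_
  filter_upwards [hN.eventually_gt_atTop 0] with i hi
  simp only [Pi.inv_apply]
  field_simp

lemma tendsto_natCast_mul_log_one_add (hx : Tendsto x l (𝓝 0))
    (hxN : Tendsto (fun i => x i * N i) l (𝓝 c)) :
    Tendsto (fun i => N i * log (1 + x i)) l (𝓝 c) := by
  have hlower : Tendsto (fun i => x i * N i * (1 + x i)⁻¹) l (𝓝 c) := by
    simpa using hxN.mul ((tendsto_const_nhds.add hx).inv₀ (by norm_num : (1 + 0 : ℝ) ≠ 0))
  have hpos : ∀ᶠ i in l, 0 < 1 + x i := hx.eventually (lt_mem_nhds (by norm_num : (-1 : ℝ) < 0))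
    |>.mono fun i hi => by linarith
  refine tendsto_of_tendsto_of_tendsto_of_le_of_le' hlower hxN ?_ ?_
  · filter_upwards [hpos] with i hi
    calc x i * N i * (1 + x i)⁻¹ = N i * (1 - (1 + x i)⁻¹) := by field_simp; ring
      _ ≤ N i * log (1 + x i) := by gcongr; exact one_sub_inv_le_log_of_pos hi
  · filter_upwards [hpos] with i hi
    calc N i * log (1 + x i) ≤ N i * (1 + x i - 1) := by gcongr; exact log_le_sub_one_of_pos hi
      _ = x i * N i := by ring

lemma tendsto_inv_one_add_pow (hN : Tendsto (fun i => (N i : ℝ)) l atTop)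
    (hxN : Tendsto (fun i => x i * N i) l (𝓝 c)) :
    Tendsto (fun i => (1 + x i)⁻¹ ^ N i) l (𝓝 (exp (-c))) := by
  have hx := tendsto_zero_of_tendsto_mul_natCast hN hxN
  have hlog := tendsto_natCast_mul_log_one_add hx hxN
  refine ((continuous_exp.tendsto _).comp hlog.neg).congr' ?_
  filter_upwards [hx.eventually (lt_mem_nhds (by norm_num : (-1 : ℝ) < 0))] with i hi
  have hpos : 0 < (1 + x i)⁻¹ := inv_pos.mpr (by linarith)
  rw [Function.comp_apply, ← mul_neg, ← log_inv, exp_nat_mul, exp_log hpos]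

end CompoundInterest

lemma tendsto_div_mul_sub_one_atTop {c : ℝ} (hc : c ≠ 0) :
    Tendsto (fun u : ℝ => u / (u * c - 1)) atTop (𝓝 c⁻¹) := by
  have h := (tendsto_const_nhds (x := c)).sub tendsto_inv_atTop_zero
  rw [sub_zero] at h
  refine (h.inv₀ hc).congr' ?_
  filter_upwards [eventually_gt_atTop 0] with u hu
  rw [← inv_div, sub_div, mul_div_cancel_left₀ _ hu.ne', one_div]

theorem bbp_gumbel_limit_general (γ : ℕ → ℝ) (Z₀ : ℕ → ℕ) (a t : ℕ → ℝ) (w : ℝ)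
    (hZ₀ : Tendsto (fun n => (Z₀ n : ℝ)) atTop atTop)
    (ha : ∀ n, a n = γ n * (Z₀ n : ℝ))
    (hatop : Tendsto a atTop atTop)
    (ht : ∀ n, t n = (γ n)⁻¹ * (Real.log (a n) + w))
    (ρ : ℕ → ℝ → ℝ)
    (hρ : ∀ n s, ρ n s = (1 + γ n / (Real.exp (γ n * s) - 1))⁻¹) :
    Tendsto (fun n => ρ n (t n) ^ (Z₀ n)) atTop (nhds (Real.exp (-Real.exp (-w)))) := by
  set x : ℕ → ℝ := fun n => γ n / (a n * exp w - 1)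
  have hρx : ∀ᶠ n in atTop, ρ n (t n) = (1 + x n)⁻¹ := by
    filter_upwards [hatop.eventually_gt_atTop 0] with n han
    have hγ : γ n ≠ 0 := left_ne_zero_of_mul (ha n ▸ han.ne')
    rw [hρ, ht, ← mul_assoc, mul_inv_cancel₀ hγ, one_mul, exp_add, exp_log han]
  have hxZ : Tendsto (fun n => x n * Z₀ n) atTop (𝓝 (exp (-w))) := by
    rw [exp_neg]
    refine ((tendsto_div_mul_sub_one_atTop (exp_pos w).ne').comp hatop).congr fun n => ?_
    simp only [Function.comp_apply, x, ha, div_mul_eq_mul_div, mul_comm (γ n)]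
  exact (tendsto_inv_one_add_pow hZ₀ hxZ).congr' (hρx.mono fun n h => by simp only [h])

/-- Gumbel limit for the subcritical binary branching process extinction time. -/
theorem bbp_gumbel_limit (γ : ℕ → ℝ) (Z₀ : ℕ → ℕ) (a t : ℕ → ℝ) (w : ℝ)
    (hγ0 : ∀ n, 0 < γ n) (hγ1 : ∀ n, γ n < 1)
    (hZ₀ : Tendsto (fun n => (Z₀ n : ℝ)) atTop atTop)
    (ha : ∀ n, a n = γ n * (Z₀ n : ℝ))
    (hatop : Tendsto a atTop atTop)
    (ht : ∀ n, t n = (γ n)⁻¹ * (Real.log (a n) + w))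
    (ρ : ℕ → ℝ → ℝ)
    (hρ : ∀ n s, ρ n s = (1 + γ n / (Real.exp (γ n * s) - 1))⁻¹) :
    Tendsto (fun n => ρ n (t n) ^ (Z₀ n)) atTop (nhds (Real.exp (-Real.exp (-w)))) :=
  bbp_gumbel_limit_general γ Z₀ a t w hZ₀ ha hatop ht ρ hρ
end

section
/- Let p_n : [0,∞) → [0,1] be nonincreasing with p_n(t+s) ≤ p_n(t)p_n(s), ∫_0^∞ p_n = 1, and suppose additionally that p_n(t+s) ≥ p_n(t)p_n(s) - ε_n uniformly in s,t with ε_n → 0. Then for every t ≥ 0, p_n(t) - p_n(1)^t → 0 as n → ∞, and p_n(1) → 1/e; consequently p_n(t) → e^{-t} for every t ≥ 0. -/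
open MeasureTheory Filter Real Topology Set

/-!
Submultiplicativity and mean one give `f h ≥ 1 - h`: the shifted mass `∫ f (· + h)` is at
most `f h`, while it equals `1 - ∫₀ʰ f ≥ 1 - h`. Integrating the approximate
supermultiplicativity over `[0, T]` with `T = 1 / h` gives the matching bound
`(1 + h) f h ≤ 1 + 2 h²` as soon as the defect is at most `h³`. Hence `f t` lies between
`f h ^ ⌈t / h⌉ - ⌈t / h⌉ ε` and `f h ^ ⌊t / h⌋`, that is between `(1 - h) ^ (t / h)` and
`(1 - h + O(h²)) ^ (t / h)` up to an error linear in the number of steps; letting `n → ∞` and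
then `h → 0⁺` gives `e^{-t}`.
-/

theorem tendsto_of_forall_eventually_bounds {ι α : Type*} {l : Filter ι} [l.NeBot]
    {m : Filter α} {a : α → ℝ} {lo up : ι → ℝ} {L : ℝ}
    (hlo : Tendsto lo l (𝓝 L)) (hup : Tendsto up l (𝓝 L))
    (hbounds : ∀ᶠ i in l, ∀ δ > 0, ∀ᶠ x in m, lo i - δ ≤ a x ∧ a x ≤ up i + δ) :
    Tendsto a m (𝓝 L) := by
  refine tendsto_order.2 ⟨fun b hb => ?_, fun b hb => ?_⟩
  · obtain ⟨i, hi, hbi⟩ := (hbounds.and (hlo.eventually_const_lt hb)).exists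
    filter_upwards [hi ((lo i - b) / 2) (by linarith)] with x hx
    linarith [hx.1]
  · obtain ⟨i, hi, hbi⟩ := (hbounds.and (hup.eventually_lt_const hb)).exists
    filter_upwards [hi ((b - up i) / 2) (by linarith)] with x hx
    linarith [hx.2]

theorem exp_neg_div_one_sub_le_one_sub {h : ℝ} (hh : h < 1) : exp (-(h / (1 - h))) ≤ 1 - h := by
  have hpos : 0 < 1 - h := sub_pos.2 hh
  have hexp : 1 / (1 - h) ≤ exp (h / (1 - h)) := by
    have := add_one_le_exp (h / (1 - h))
    rwa [div_add_one hpos.ne', add_sub_cancel] at this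
  rw [exp_neg, inv_le_comm₀ (exp_pos _) hpos, ← one_div]
  exact hexp

theorem exp_le_one_sub_pow_ceil {h t : ℝ} (hh₀ : 0 < h) (hh₁ : h < 1) (ht : 0 ≤ t) :
    exp (-(t + h) / (1 - h)) ≤ (1 - h) ^ ⌈t / h⌉₊ := by
  have hpos : 0 < 1 - h := sub_pos.2 hh₁
  have hceil : (⌈t / h⌉₊ : ℝ) * h ≤ t + h := by
    have := Nat.ceil_lt_add_one (div_nonneg ht hh₀.le)
    calc (⌈t / h⌉₊ : ℝ) * h ≤ (t / h + 1) * h := by gcongr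
      _ = t + h := by field_simp
  calc exp (-(t + h) / (1 - h)) ≤ exp (⌈t / h⌉₊ * -(h / (1 - h))) := by
        rw [exp_le_exp, neg_div, mul_neg, neg_le_neg_iff, ← mul_div_assoc]
        gcongr
    _ = exp (-(h / (1 - h))) ^ ⌈t / h⌉₊ := exp_nat_mul _ _
    _ ≤ (1 - h) ^ ⌈t / h⌉₊ := by gcongr; exact exp_neg_div_one_sub_le_one_sub hh₁

theorem pow_floor_le_exp {x h t : ℝ} (hx : 0 ≤ x) (hh₀ : 0 < h) (hh : h ≤ 1 / 2)
    (hxh : (1 + h) * x ≤ 1 + 2 * h ^ 2) :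
    x ^ ⌊t / h⌋₊ ≤ exp ((t - h) * (2 * h - 1) / (1 + h)) := by
  set y := h * (2 * h - 1) / (1 + h) with hy_def
  have hy : y ≤ 0 := div_nonpos_of_nonpos_of_nonneg (by nlinarith) (by linarith)
  have hxy : x ≤ y + 1 := by
    rw [div_add_one (by linarith), le_div_iff₀ (by linarith)]
    nlinarith
  have hfloor : (t - h) * (2 * h - 1) / (1 + h) ≥ ⌊t / h⌋₊ * y := by
    have hk : t / h - 1 ≤ ⌊t / h⌋₊ := (Nat.sub_one_lt_floor _).le
    calc (⌊t / h⌋₊ : ℝ) * y ≤ (t / h - 1) * y := mul_le_mul_of_nonpos_right hk hy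
      _ = (t - h) * (2 * h - 1) / (1 + h) := by rw [hy_def]; field_simp
  calc x ^ ⌊t / h⌋₊ ≤ exp y ^ ⌊t / h⌋₊ := by
        gcongr; exact hxy.trans (add_one_le_exp y)
    _ = exp (⌊t / h⌋₊ * y) := (exp_nat_mul _ _).symm
    _ ≤ _ := exp_le_exp.2 hfloor

section

variable {f : ℝ → ℝ}

theorem MeasureTheory.IntegrableOn.intervalIntegrable_of_Ioi {c a b : ℝ}
    (hf : IntegrableOn f (Ioi c)) (ha : c ≤ a) (hb : c ≤ b) : IntervalIntegrable f volume a b :=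
  intervalIntegrable_iff.2 (hf.mono_set fun _ hx => (le_min ha hb).trans_lt hx.1)

theorem intervalIntegral_le_integral_Ioi {a T : ℝ} (hf : IntegrableOn f (Ioi a))
    (hnn : ∀ x > a, 0 ≤ f x) (hT : a ≤ T) : ∫ x in a..T, f x ≤ ∫ x in Ioi a, f x := by
  rw [intervalIntegral.integral_of_le hT]
  exact setIntegral_mono_set hf (ae_restrict_of_forall_mem measurableSet_Ioi hnn)
    Ioc_subset_Ioi_self.eventuallyLE

theorem AntitoneOn.intervalIntegral_le_sub_mul {a b : ℝ} (hf : AntitoneOn f (Icc a b))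
    (hab : a ≤ b) : ∫ x in a..b, f x ≤ (b - a) * f a := by
  have hfi := (uIcc_of_le hab ▸ hf).intervalIntegrable (μ := volume)
  simpa using intervalIntegral.integral_mono_on hab hfi intervalIntegrable_const
    fun x hx => hf (left_mem_Icc.2 hab) hx hx.1

theorem AntitoneOn.sub_mul_le_intervalIntegral {a b : ℝ} (hf : AntitoneOn f (Icc a b))
    (hab : a ≤ b) : (b - a) * f b ≤ ∫ x in a..b, f x := by
  have hfi := (uIcc_of_le hab ▸ hf).intervalIntegrable (μ := volume)
  simpa using intervalIntegral.integral_mono_on hab intervalIntegrable_const hfi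
    fun x hx => hf hx (right_mem_Icc.2 hab) hx.2

theorem one_sub_le_of_submul (h01 : ∀ t ≥ 0, f t ∈ Icc (0 : ℝ) 1)
    (hint : ∫ t in Ioi (0 : ℝ), f t = 1) {h : ℝ} (hh : 0 ≤ h)
    (hsub : ∀ x ≥ 0, f (x + h) ≤ f x * f h) : 1 - h ≤ f h := by
  have hf : IntegrableOn f (Ioi 0) := .of_integral_ne_zero (by simp [hint])
  have hfi {a b : ℝ} (ha : 0 ≤ a) (hb : 0 ≤ b) := hf.intervalIntegrable_of_Ioi ha hb
  have hI : Tendsto (fun T => ∫ x in (0 : ℝ)..T, f x) atTop (𝓝 1) :=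
    hint ▸ intervalIntegral_tendsto_integral_Ioi 0 hf tendsto_id
  have hbound : ∀ T ≥ 0, ∫ x in (0 : ℝ)..T + h, f x ≤ h + f h := by
    intro T hT
    have hhead : ∫ x in (0 : ℝ)..h, f x ≤ h := by
      simpa using intervalIntegral.integral_mono_on hh (hfi le_rfl hh)
        (intervalIntegrable_const (c := (1 : ℝ))) fun x hx => (h01 x hx.1).2
    have hshift : ∫ x in (0 : ℝ)..T, f (x + h) ≤ f h * ∫ x in (0 : ℝ)..T, f x := by
      rw [← intervalIntegral.integral_const_mul]
      refine intervalIntegral.integral_mono_on hT ?_ ((hfi le_rfl hT).const_mul _)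
        fun x hx => (hsub x hx.1).trans_eq (mul_comm _ _)
      simpa using (hfi hh (by linarith : 0 ≤ T + h)).comp_add_right h
    have htrunc : ∫ x in (0 : ℝ)..T, f x ≤ 1 :=
      hint ▸ intervalIntegral_le_integral_Ioi hf (fun x hx => (h01 x hx.le).1) hT
    rw [intervalIntegral.integral_comp_add_right, zero_add] at hshift
    rw [← intervalIntegral.integral_add_adjacent_intervals (hfi le_rfl hh)
      (hfi hh (by linarith : 0 ≤ T + h))]
    nlinarith [(h01 h hh).1]
  have := le_of_tendsto (hI.comp (tendsto_atTop_add_const_right _ h tendsto_id))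
    ((eventually_ge_atTop 0).mono hbound)
  linarith

theorem one_add_mul_le_of_approx_supermul (h01 : ∀ t ≥ 0, f t ∈ Icc (0 : ℝ) 1)
    (hmono : AntitoneOn f (Ici 0)) (hint : ∫ t in Ioi (0 : ℝ), f t = 1) {e h T : ℝ}
    (hh : 0 ≤ h) (hT : 0 < T) (hlow : ∀ x ≥ 0, f x * f h - e ≤ f (x + h)) :
    (1 + h) * f h ≤ 1 + h / T + T * e := by
  have hf : IntegrableOn f (Ioi 0) := .of_integral_ne_zero (by simp [hint])
  have hfi {a b : ℝ} (ha : 0 ≤ a) (hb : 0 ≤ b) := hf.intervalIntegrable_of_Ioi ha hb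
  have hanti {a b : ℝ} (ha : 0 ≤ a) : AntitoneOn f (Icc a b) :=
    hmono.mono fun x hx => ha.trans hx.1
  have hTh : 0 ≤ T + h := by linarith
  have hshift : f h * (∫ x in (0 : ℝ)..T, f x) - T * e ≤ ∫ x in h..T + h, f x := by
    have := intervalIntegral.integral_mono_on hT.le
      (((hfi le_rfl hT.le).mul_const (f h)).sub intervalIntegrable_const)
      (by simpa using (hfi hh hTh).comp_add_right h) fun x hx => hlow x hx.1
    rw [intervalIntegral.integral_comp_add_right, zero_add, intervalIntegral.integral_sub
      ((hfi le_rfl hT.le).mul_const _) intervalIntegrable_const,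
      intervalIntegral.integral_mul_const, intervalIntegral.integral_const] at this
    simpa [mul_comm] using this
  have hsplit : (∫ x in (0 : ℝ)..h, f x) + ∫ x in h..T + h, f x
      = (∫ x in (0 : ℝ)..T, f x) + ∫ x in T..T + h, f x := by
    rw [intervalIntegral.integral_add_adjacent_intervals (hfi le_rfl hh) (hfi hh hTh),
      intervalIntegral.integral_add_adjacent_intervals (hfi le_rfl hT.le) (hfi hT.le hTh)]
  have hhead : h * f h ≤ ∫ x in (0 : ℝ)..h, f x := by
    simpa using (hanti le_rfl).sub_mul_le_intervalIntegral hh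
  have htail : ∫ x in T..T + h, f x ≤ h * f T := by
    simpa using (hanti hT.le).intervalIntegral_le_sub_mul (by linarith : T ≤ T + h)
  have hmarkov : T * f T ≤ ∫ x in (0 : ℝ)..T, f x := by
    simpa using (hanti le_rfl).sub_mul_le_intervalIntegral hT.le
  have htrunc : ∫ x in (0 : ℝ)..T, f x ≤ 1 :=
    hint ▸ intervalIntegral_le_integral_Ioi hf (fun x hx => (h01 x hx.le).1) hT.le
  have hfT : h * f T ≤ h / T := by
    rw [← mul_one_div]
    exact mul_le_mul_of_nonneg_left ((le_div_iff₀ hT).2 (by linarith)) hh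
  nlinarith [mul_nonneg (sub_nonneg.2 (h01 h hh).2) (sub_nonneg.2 htrunc)]

theorem map_nat_mul_le_pow (hf0 : f 0 ≤ 1) {h : ℝ} (hh : 0 ≤ h) (hfh : 0 ≤ f h)
    (hsub : ∀ x ≥ 0, f (x + h) ≤ f x * f h) (k : ℕ) : f (k * h) ≤ f h ^ k := by
  induction k with
  | zero => simpa using hf0
  | succ k ih =>
    calc f ((k + 1 : ℕ) * h) = f (k * h + h) := by push_cast; ring_nf
      _ ≤ f (k * h) * f h := hsub _ (by positivity)
      _ ≤ f h ^ k * f h := mul_le_mul_of_nonneg_right ih hfh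
      _ = f h ^ (k + 1) := (pow_succ _ _).symm

theorem pow_sub_nat_mul_le_map_nat_mul (hf0 : 1 ≤ f 0) {e h : ℝ} (he : 0 ≤ e) (hh : 0 ≤ h)
    (hfh : f h ∈ Icc (0 : ℝ) 1) (hlow : ∀ x ≥ 0, f x * f h - e ≤ f (x + h)) (k : ℕ) :
    f h ^ k - k * e ≤ f (k * h) := by
  induction k with
  | zero => simpa using hf0
  | succ k ih =>
    have hstep := hlow (k * h) (by positivity)
    have hmul := mul_le_mul_of_nonneg_right ih hfh.1
    rw [Nat.cast_succ, add_one_mul, add_one_mul, pow_succ]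
    nlinarith [mul_nonneg (mul_nonneg k.cast_nonneg he) (sub_nonneg.2 hfh.2)]

theorem le_exp_of_approx_mul (h01 : ∀ t ≥ 0, f t ∈ Icc (0 : ℝ) 1)
    (hmono : AntitoneOn f (Ici 0)) (hint : ∫ t in Ioi (0 : ℝ), f t = 1) {e h t : ℝ}
    (hh₀ : 0 < h) (hh : h ≤ 1 / 2) (he : e ≤ h ^ 3) (ht : 0 ≤ t)
    (hsub : ∀ x ≥ 0, f (x + h) ≤ f x * f h)
    (hlow : ∀ x ≥ 0, f x * f h - e ≤ f (x + h)) :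
    f t ≤ exp ((t - h) * (2 * h - 1) / (1 + h)) := by
  have hfh : (1 + h) * f h ≤ 1 + 2 * h ^ 2 := by
    have := one_add_mul_le_of_approx_supermul h01 hmono hint hh₀.le (one_div_pos.2 hh₀) hlow
    have he' : 1 / h * e ≤ h ^ 2 := by
      rw [one_div_mul_eq_div, div_le_iff₀ hh₀]; linarith
    rw [show h / (1 / h) = h ^ 2 by field_simp] at this
    linarith
  have hkh : ⌊t / h⌋₊ * h ≤ t := (le_div_iff₀ hh₀).1 (Nat.floor_le (by positivity))
  calc f t ≤ f (⌊t / h⌋₊ * h) := hmono (mem_Ici.2 (by positivity)) (mem_Ici.2 ht) hkh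
    _ ≤ f h ^ ⌊t / h⌋₊ :=
        map_nat_mul_le_pow (h01 0 le_rfl).2 hh₀.le (h01 h hh₀.le).1 hsub _
    _ ≤ _ := pow_floor_le_exp (h01 h hh₀.le).1 hh₀ hh hfh

theorem exp_sub_le_of_approx_mul (h01 : ∀ t ≥ 0, f t ∈ Icc (0 : ℝ) 1)
    (hmono : AntitoneOn f (Ici 0)) (hint : ∫ t in Ioi (0 : ℝ), f t = 1)
    (hsub : ∀ s ≥ 0, ∀ t ≥ 0, f (t + s) ≤ f t * f s) {e h t : ℝ} (hh₀ : 0 < h)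
    (hh₁ : h < 1) (ht : 0 ≤ t) (hlow : ∀ x ≥ 0, f x * f h - e ≤ f (x + h)) :
    exp (-(t + h) / (1 - h)) - ⌈t / h⌉₊ * e ≤ f t := by
  have hfh := h01 h hh₀.le
  have hf0 : 1 ≤ f 0 := by simpa using one_sub_le_of_submul h01 hint le_rfl (hsub 0 le_rfl)
  have he : 0 ≤ e := by
    have := hlow 0 le_rfl
    rw [zero_add] at this
    nlinarith [hfh.1]
  have hKh : t ≤ ⌈t / h⌉₊ * h := (div_le_iff₀ hh₀).1 (Nat.le_ceil _)
  calc exp (-(t + h) / (1 - h)) - ⌈t / h⌉₊ * e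
        ≤ (1 - h) ^ ⌈t / h⌉₊ - ⌈t / h⌉₊ * e := by
        gcongr; exact exp_le_one_sub_pow_ceil hh₀ hh₁ ht
    _ ≤ f h ^ ⌈t / h⌉₊ - ⌈t / h⌉₊ * e := by
        gcongr; exact one_sub_le_of_submul h01 hint hh₀.le (hsub h hh₀.le)
    _ ≤ f (⌈t / h⌉₊ * h) := pow_sub_nat_mul_le_map_nat_mul hf0 he hh₀.le hfh hlow _
    _ ≤ f t := hmono (mem_Ici.2 ht) (mem_Ici.2 (ht.trans hKh)) hKh

end

theorem tendsto_exp_neg_of_approx_mul {p : ℕ → ℝ → ℝ} {ε : ℕ → ℝ}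
    (hrange : ∀ n, ∀ t ≥ 0, p n t ∈ Icc (0 : ℝ) 1)
    (hmono : ∀ n, AntitoneOn (p n) (Ici 0))
    (hsub : ∀ n, ∀ s ≥ 0, ∀ t ≥ 0, p n (t + s) ≤ p n t * p n s)
    (hint : ∀ n, ∫ t in Ioi (0 : ℝ), p n t = 1)
    (hlow : ∀ n, ∀ s ≥ 0, ∀ t ≥ 0, p n t * p n s - ε n ≤ p n (t + s))
    (hε : Tendsto ε atTop (𝓝 0)) {t : ℝ} (ht : 0 ≤ t) :
    Tendsto (fun n => p n t) atTop (𝓝 (exp (-t))) := by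
  refine tendsto_of_forall_eventually_bounds (l := 𝓝[>] 0)
    (lo := fun h => exp (-(t + h) / (1 - h)))
    (up := fun h => exp ((t - h) * (2 * h - 1) / (1 + h))) ?_ ?_ ?_
  · have : ContinuousAt (fun h => exp (-(t + h) / (1 - h))) 0 := by fun_prop (disch := norm_num)
    simpa using this.tendsto.mono_left nhdsWithin_le_nhds
  · have : ContinuousAt (fun h => exp ((t - h) * (2 * h - 1) / (1 + h))) 0 := by
      fun_prop (disch := norm_num)
    simpa using this.tendsto.mono_left nhdsWithin_le_nhds
  filter_upwards [Ioc_mem_nhdsGT (by norm_num : (0 : ℝ) < 1 / 2)] with h ⟨hh₀, hh⟩ δ hδ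
  have hsmall : ∀ᶠ n in atTop, ε n ≤ h ^ 3 ∧ ⌈t / h⌉₊ * ε n ≤ δ :=
    (hε.eventually (ge_mem_nhds (by positivity))).and
      ((hε.const_mul _).eventually (ge_mem_nhds (by simpa using hδ)))
  filter_upwards [hsmall] with n ⟨hεh, hεδ⟩
  constructor
  · have := exp_sub_le_of_approx_mul (hrange n) (hmono n) (hint n) (hsub n) hh₀ (by linarith) ht
      (hlow n h hh₀.le)
    linarith
  · have := le_exp_of_approx_mul (hrange n) (hmono n) (hint n) hh₀ hh hεh ht (hsub n h hh₀.le)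
      (hlow n h hh₀.le)
    linarith

/-- Approximately multiplicative, nonincreasing, mean-one tails converge to the
exponential: `pₙ(t) - pₙ(1)^t → 0`, `pₙ(1) → 1/e`, hence `pₙ(t) → e^{-t}`. -/
theorem approx_multiplicative_exponential_limit (p : ℕ → ℝ → ℝ) (ε : ℕ → ℝ)
    (hrange : ∀ n, ∀ t ≥ (0:ℝ), p n t ∈ Set.Icc (0:ℝ) 1)
    (hmono : ∀ n, AntitoneOn (p n) (Set.Ici (0:ℝ)))
    (hsub : ∀ n, ∀ s ≥ (0:ℝ), ∀ t ≥ (0:ℝ), p n (t + s) ≤ p n t * p n s)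
    (hint : ∀ n, ∫ t in Set.Ioi (0:ℝ), p n t = 1)
    (hlow : ∀ n, ∀ s ≥ (0:ℝ), ∀ t ≥ (0:ℝ), p n t * p n s - ε n ≤ p n (t + s))
    (hε : Tendsto ε atTop (nhds 0)) :
    (∀ t ≥ (0:ℝ), Tendsto (fun n => p n t - (p n 1) ^ t) atTop (nhds 0)) ∧
    Tendsto (fun n => p n 1) atTop (nhds (Real.exp (-1))) ∧
    (∀ t ≥ (0:ℝ), Tendsto (fun n => p n t) atTop (nhds (Real.exp (-t)))) := by
  have hexp (t : ℝ) (ht : 0 ≤ t) : Tendsto (fun n => p n t) atTop (𝓝 (exp (-t))) :=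
    tendsto_exp_neg_of_approx_mul hrange hmono hsub hint hlow hε ht
  have hone : Tendsto (fun n => p n 1) atTop (𝓝 (exp (-1))) := hexp 1 zero_le_one
  refine ⟨fun t ht => ?_, hone, hexp⟩
  have hpow : Tendsto (fun n => p n 1 ^ t) atTop (𝓝 (exp (-t))) := by
    have := hone.rpow_const (p := t) (Or.inl (exp_pos _).ne')
    rwa [← exp_mul, neg_one_mul] at this
  simpa using (hexp t ht).sub hpow
end
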